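/- arXiv:1011.5206 — 6 statements merged into one kernel-verified Lean document; each statement's English description precedes it below -/
import Mathlib

section
/- Let f(x,y) = sqrt((x+y)^2+1) + sqrt(1-x^2)/2 + sqrt(1-y^2)/2 - 2 on [-1,1]^2. Then f(x,y) ≤ 1/2 for all x,y ∈ [-1,1]. -/
/-! Bound each square root by its tangent line, `√A ≤ (A + 4) / 4` at `A = 4` and
`√B ≤ B + 1/4` at `B = 1/4`. The three bounds add up to `f x y ≤ 1/2 - (x - y)^2 / 4`,
so equality holds exactly at `x = y = ±√3/2`. -/

noncomputable def f (x y : ℝ) : ℝ :=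
  Real.sqrt ((x + y) ^ 2 + 1) + Real.sqrt (1 - x ^ 2) / 2 + Real.sqrt (1 - y ^ 2) / 2 - 2

theorem two_mul_mul_sqrt_le_sq_add (c : ℝ) {t : ℝ} (ht : 0 ≤ t) : 2 * c * √t ≤ c ^ 2 + t := by
  nlinarith [sq_nonneg (c - √t), Real.sq_sqrt ht]

theorem stmt_0 (x y : ℝ) (hx : x ∈ Set.Icc (-1 : ℝ) 1) (hy : y ∈ Set.Icc (-1 : ℝ) 1) :
    f x y ≤ 1 / 2 := by
  have tangent_sum := two_mul_mul_sqrt_le_sq_add 2 (by positivity : 0 ≤ (x + y) ^ 2 + 1)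
  have tangent_x := two_mul_mul_sqrt_le_sq_add (1 / 2) (by nlinarith [hx.1, hx.2] : 0 ≤ 1 - x ^ 2)
  have tangent_y := two_mul_mul_sqrt_le_sq_add (1 / 2) (by nlinarith [hy.1, hy.2] : 0 ≤ 1 - y ^ 2)
  unfold f
  linear_combination (tangent_sum + 2 * tangent_x + 2 * tangent_y + sq_nonneg (x - y)) / 4
end

section
/- Let f(x,y) = sqrt((x+y)^2+1) + sqrt(1-x^2)/2 + sqrt(1-y^2)/2 - 2. For all a,b,c ∈ [-1,1] with a+b ≥ 0 and b+c ≤ 0, we have f(a,b) + f(b,c) ≤ 0.244. -/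
/-!
Since `f x y = f y x = f (-x) (-y)`, we may assume `b ≤ 0`. With
`g x y = √((x + y)² + 1) + √(1 - x²)/2` we have `f a b + f b c = g a b + g c b + √(1 - b²) - 4`,
in which `a` and `c` no longer interact. Weighted Cauchy–Schwarz bounds `g a b` (using `a + b ≥ 0`)
and `g c b` (for arbitrary `c`) by functions of `b` alone; for `b ≤ -1/5` the maximum of `g a b` is
even attained at the endpoint `a = -b`. Replacing every remaining square root by a tangent line
`√y ≤ y / (2m) + m / 2` leaves linear inequalities in `b²`. The true maximum is about `0.2434`,
near `b = -0.47`, so the tangent points for `b ≤ -1/5` are tuned to that configuration.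
-/

open Real

noncomputable def g (x y : ℝ) : ℝ := √((x + y) ^ 2 + 1) + √(1 - x ^ 2) / 2

lemma f_eq_g (x y : ℝ) : f x y = g x y + √(1 - y ^ 2) / 2 - 2 := by
  rw [f, g]

lemma f_comm (x y : ℝ) : f x y = f y x := by
  rw [f, f, add_comm x y]
  ring

lemma f_neg_neg (x y : ℝ) : f (-x) (-y) = f x y := by
  simp only [f, neg_sq, ← neg_add]

lemma f_add_f_eq (a b c : ℝ) : f a b + f b c = g a b + g c b + √(1 - b ^ 2) - 4 := by
  rw [f_eq_g, f_comm, f_eq_g]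
  ring

lemma g_neg_self (b : ℝ) : g (-b) b = 1 + √(1 - b ^ 2) / 2 := by
  simp [g]

lemma le_div_two_mul_add_half_of_sq_le {x y m : ℝ} (h : x ^ 2 ≤ y) (hm : 0 < m) :
    x ≤ y / (2 * m) + m / 2 := by
  rw [div_add' _ _ _ (by positivity), le_div_iff₀ (by positivity)]
  nlinarith [sq_nonneg (x - m)]

lemma sq_sqrt_one_sub_sq {x : ℝ} (h₁ : -1 ≤ x) (h₂ : x ≤ 1) : √(1 - x ^ 2) ^ 2 = 1 - x ^ 2 :=
  sq_sqrt (by nlinarith)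

section LeftTerm

variable {a b : ℝ} (ha : a ≤ 1) (hab : 0 ≤ a + b)
include ha hab

lemma sq_add_le_sqrt_sub_sqrt (hb : -1 ≤ b) (hb' : b ≤ -1/5) :
    (a + b) ^ 2 ≤ √(1 - b ^ 2) - √(1 - a ^ 2) := by
  set P := √(1 - a ^ 2)
  set Q := √(1 - b ^ 2)
  have hP : P ^ 2 = 1 - a ^ 2 := sq_sqrt_one_sub_sq (by linarith) ha
  have hQ : Q ^ 2 = 1 - b ^ 2 := sq_sqrt_one_sub_sq hb (by linarith)
  have hP_le := le_div_two_mul_add_half_of_sq_le hP.le (by norm_num : (0 : ℝ) < 1/2)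
  have hQ_le := le_div_two_mul_add_half_of_sq_le hQ.le (by norm_num : (0 : ℝ) < 97/100)
  have hQP : Q + P ≤ (1 - b ^ 2) / (97/50) + 97/200 + (5/4 - a ^ 2) := by
    norm_num at hP_le hQ_le ⊢
    linarith
  have hkey : (a + b) * (Q + P) ≤ a - b := calc
    (a + b) * (Q + P) ≤ (a + b) * ((1 - b ^ 2) / (97/50) + 97/200 + (5/4 - a ^ 2)) :=
      mul_le_mul_of_nonneg_left hQP hab
    _ ≤ a - b := by nlinarith [mul_nonneg hab (sq_nonneg (a - 7/10))]
  -- multiplying by `a + b` turns the right side into `a² - b² = Q² - P²`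
  have hprod : (a + b) ^ 2 * (Q + P) ≤ (Q - P) * (Q + P) := by
    nlinarith [mul_le_mul_of_nonneg_left hkey hab]
  rcases (add_nonneg (sqrt_nonneg _) (sqrt_nonneg _) : 0 ≤ Q + P).eq_or_lt with hzero | hpos
  · -- `Q + P = 0` forces `a = 1` and `b = -1`
    nlinarith [sqrt_nonneg (1 - a ^ 2), sqrt_nonneg (1 - b ^ 2)]
  · exact le_of_mul_le_mul_right hprod hpos

lemma g_le_g_neg_self (hb : -1 ≤ b) (hb' : b ≤ -1/5) : g a b ≤ g (-b) b := by
  have hS := le_div_two_mul_add_half_of_sq_le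
    (sq_sqrt (by positivity) : √((a + b) ^ 2 + 1) ^ 2 = (a + b) ^ 2 + 1).le one_pos
  rw [g_neg_self, g]
  linarith [sq_add_le_sqrt_sub_sqrt ha hab hb hb']

end LeftTerm

lemma sq_g_le_of_neg_fifth_le {a b : ℝ} (ha : a ≤ 1) (hab : 0 ≤ a + b) (hb : -1/5 ≤ b)
    (hb' : b ≤ 0) : g a b ^ 2 ≤ 51/20 - 39/10 * b ^ 2 := by
  set S := √((a + b) ^ 2 + 1)
  set P := √(1 - a ^ 2)
  have hS : S ^ 2 = (a + b) ^ 2 + 1 := sq_sqrt (by positivity)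
  have hP : P ^ 2 = 1 - a ^ 2 := sq_sqrt_one_sub_sq (by linarith) ha
  rw [g]
  -- Cauchy–Schwarz `(S + P/2)² ≤ (1 + t) S² + (1 + 1/t) P²/4` with `t = 1/3` resp. `t = 1/4`;
  -- for `t = 1/3` the resulting quadratic in `a` is convex, hence maximal at `a = -b` or `a = 1`
  rcases le_total b (-1/10) with hb₀ | hb₀
  · nlinarith [sq_nonneg (2 * S - 3 * P), mul_nonneg hab (sub_nonneg.2 ha)]
  · nlinarith [sq_nonneg (S - 2 * P), mul_nonpos_of_nonpos_of_nonneg hb' hab]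

section RightTerm

/-! Weighted Cauchy–Schwarz, then the maximum over `c` of the resulting concave quadratic in `c`. -/

variable {c : ℝ} (hc₁ : -1 ≤ c) (hc₂ : c ≤ 1) (b : ℝ)
include hc₁ hc₂

lemma sq_two_mul_g_le : (2 * g c b) ^ 2 ≤ 13 * b ^ 2 + 1495/126 := by
  have hS : √((c + b) ^ 2 + 1) ^ 2 = (c + b) ^ 2 + 1 := sq_sqrt (by positivity)
  have hR := sq_sqrt_one_sub_sq hc₁ hc₂
  rw [g]
  nlinarith [sq_nonneg (9 * √((c + b) ^ 2 + 1) - 28 * √(1 - c ^ 2)), sq_nonneg (5 * c - 9 * b)]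

lemma sq_two_mul_g_le' : (2 * g c b) ^ 2 ≤ 24 * b ^ 2 + 54/5 := by
  have hS : √((c + b) ^ 2 + 1) ^ 2 = (c + b) ^ 2 + 1 := sq_sqrt (by positivity)
  have hR := sq_sqrt_one_sub_sq hc₁ hc₂
  rw [g]
  nlinarith [sq_nonneg (2 * √((c + b) ^ 2 + 1) - 5 * √(1 - c ^ 2)), sq_nonneg (c - 4 * b)]

end RightTerm

section Sum

variable {a b c : ℝ} (ha : a ≤ 1) (hab : 0 ≤ a + b) (hc₁ : -1 ≤ c) (hc₂ : c ≤ 1)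
include ha hab hc₁ hc₂

lemma f_add_f_le_of_le_neg_fifth (hb : -1 ≤ b) (hb' : b ≤ -1/5) : f a b + f b c ≤ 0.244 := by
  have hQ := sq_sqrt_one_sub_sq hb (by linarith)
  have hL := g_le_g_neg_self ha hab hb hb'
  have hR := le_div_two_mul_add_half_of_sq_le (sq_two_mul_g_le hc₁ hc₂ b)
    (by norm_num : (0 : ℝ) < 23/6)
  have hQ_le := le_div_two_mul_add_half_of_sq_le hQ.le (by norm_num : (0 : ℝ) < 221/250)
  have hb₁ : 1/25 ≤ b ^ 2 := by nlinarith
  have hb₂ : b ^ 2 ≤ 1 := by nlinarith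
  rw [f_add_f_eq]
  rw [g_neg_self] at hL
  norm_num at hR hQ_le ⊢
  linarith

lemma f_add_f_le_of_neg_fifth_le (hb : -1/5 ≤ b) (hb' : b ≤ 0) : f a b + f b c ≤ 0.244 := by
  have hQ := sq_sqrt_one_sub_sq (by linarith) (by linarith : b ≤ 1)
  have hL := le_div_two_mul_add_half_of_sq_le (sq_g_le_of_neg_fifth_le ha hab hb hb')
    (by norm_num : (0 : ℝ) < 3/2)
  have hR := le_div_two_mul_add_half_of_sq_le (sq_two_mul_g_le' hc₁ hc₂ b)
    (by norm_num : (0 : ℝ) < 10/3)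
  have hQ_le := le_div_two_mul_add_half_of_sq_le hQ.le one_pos
  rw [f_add_f_eq]
  norm_num at hL hR hQ_le ⊢
  linarith

end Sum

theorem stmt_1 (a b c : ℝ) (ha : a ∈ Set.Icc (-1 : ℝ) 1) (hb : b ∈ Set.Icc (-1 : ℝ) 1)
    (hc : c ∈ Set.Icc (-1 : ℝ) 1) (hab : a + b ≥ 0) (hbc : b + c ≤ 0) :
    f a b + f b c ≤ 0.244 := by
  wlog hb₀ : b ≤ 0 generalizing a b c
  · have neg_mem (x : ℝ) (hx : x ∈ Set.Icc (-1 : ℝ) 1) : -x ∈ Set.Icc (-1 : ℝ) 1 := by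
      rwa [Set.neg_mem_Icc_iff, neg_neg]
    have h := this (-c) (-b) (-a) (neg_mem c hc) (neg_mem b hb) (neg_mem a ha)
      (by linarith) (by linarith) (by linarith)
    rwa [f_neg_neg, f_neg_neg, add_comm, f_comm c, f_comm b] at h
  obtain ⟨-, ha⟩ := ha
  obtain ⟨hb₁, -⟩ := hb
  obtain ⟨hc₁, hc₂⟩ := hc
  rcases le_total b (-1/5) with hb' | hb'
  · exact f_add_f_le_of_le_neg_fifth ha hab hc₁ hc₂ hb₁ hb'
  · exact f_add_f_le_of_neg_fifth_le ha hab hc₁ hc₂ hb' hb₀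
end

section
/- For all c₃ ∈ [-1,1], f(1,c₃) + f(c₃,-1) < 0, where f(x,y) = sqrt((x+y)^2+1) + sqrt(1-x^2)/2 + sqrt(1-y^2)/2 - 2. -/
/-! The sum equals `√((1 + c)² + 1) + √((c - 1)² + 1) + √(1 - c²) - 4`. Bounding each root by its
tangent line at the radicand `9/4`, `9/4`, `9/16` respectively, the `c²` terms cancel and what is
left is `2 + 15/8 < 4`. -/

theorem Real.sqrt_le_div_add_half {t k : ℝ} (ht : 0 ≤ t) (hk : 0 < k) :
    √t ≤ t / (2 * k) + k / 2 := by
  rw [div_add_div _ _ (by positivity) two_ne_zero, le_div_iff₀ (by positivity)]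
  nlinarith [Real.sq_sqrt ht, sq_nonneg (√t - k)]

theorem f_one_add_f_neg_one (c : ℝ) :
    f 1 c + f c (-1) = √((1 + c) ^ 2 + 1) + √((c - 1) ^ 2 + 1) + √(1 - c ^ 2) - 4 := by
  simp only [f]
  norm_num
  ring_nf

theorem stmt_5 (c₃ : ℝ) (h : c₃ ∈ Set.Icc (-1 : ℝ) 1) : f 1 c₃ + f c₃ (-1) < 0 := by
  have hc : 0 ≤ 1 - c₃ ^ 2 := by nlinarith [h.1, h.2]
  have b₁ := Real.sqrt_le_div_add_half (k := 3 / 2) (by positivity : 0 ≤ (1 + c₃) ^ 2 + 1)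
    (by norm_num)
  have b₂ := Real.sqrt_le_div_add_half (k := 3 / 2) (by positivity : 0 ≤ (c₃ - 1) ^ 2 + 1)
    (by norm_num)
  have b₃ := Real.sqrt_le_div_add_half (k := 3 / 4) hc (by norm_num)
  rw [f_one_add_f_neg_one]
  linear_combination b₁ + b₂ + b₃
end

section
/- For any two d×d Hermitian positive semidefinite matrices A and B with eigenvalues λ^A and λ^B (each listed with multiplicity), there exists a permutation π of {1,…,d} such that Tr(A B) ≤ ∑_j λ^A_{π(j)} λ^B_j. -/
/-!
Diagonalize `A = U diag(λᴬ) U*` and `B = V diag(λᴮ) V*`. With the unitary `K = U* V`,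
`Tr(AB) = ∑ᵢⱼ λᴬᵢ |Kᵢⱼ|² λᴮⱼ`, and `(|Kᵢⱼ|²)` is doubly stochastic. By Birkhoff's theorem it is a
convex combination of permutation matrices, so this bilinear expression is at most its value at
one of them.
-/

open scoped ComplexOrder
open Matrix

variable {n : Type*} [Fintype n] [DecidableEq n]

theorem exists_perm_dotProduct_mulVec_le {R : Type*} [Field R] [LinearOrder R]
    [IsStrictOrderedRing R] {S : Matrix n n R} (hS : S ∈ doublyStochastic R n) (a b : n → R) :
    ∃ σ : Equiv.Perm n, a ⬝ᵥ S *ᵥ b ≤ ∑ i, a (σ i) * b i := by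
  let f : Matrix n n R →ₗ[R] R :=
    { toFun := fun M => a ⬝ᵥ M *ᵥ b
      map_add' := fun M N => by simp only [add_mulVec, dotProduct_add]
      map_smul' := fun c M => by simp only [smul_mulVec, dotProduct_smul, RingHom.id_apply] }
  rw [← SetLike.mem_coe, doublyStochastic_eq_convexHull_permMatrix] at hS
  obtain ⟨_, ⟨σ, rfl⟩, hσ⟩ := (f.convexOn convex_univ).exists_ge_of_mem_convexHull (by simp) hS
  refine ⟨σ.symm, hσ.trans_eq ?_⟩
  change a ⬝ᵥ σ.permMatrix R *ᵥ b = a ∘ σ.symm ⬝ᵥ b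
  rw [permMatrix_mulVec, comp_equiv_symm_dotProduct]

theorem normSq_mem_doublyStochastic {𝕜 : Type*} [RCLike 𝕜] {K : Matrix n n 𝕜}
    (hK : K ∈ unitaryGroup n 𝕜) : of (fun i j => ‖K i j‖ ^ 2) ∈ doublyStochastic ℝ n := by
  refine mem_doublyStochastic_iff_sum.mpr ⟨fun i j => sq_nonneg _, fun i => ?_, fun j => ?_⟩
  · have h := congr_fun₂ (mem_unitaryGroup_iff.mp hK) i i
    simp only [star_eq_conjTranspose, mul_apply, conjTranspose_apply, one_apply_eq,
      RCLike.star_def, RCLike.mul_conj] at h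
    exact_mod_cast h
  · have h := congr_fun₂ (mem_unitaryGroup_iff'.mp hK) j j
    simp only [star_eq_conjTranspose, mul_apply, conjTranspose_apply, one_apply_eq,
      RCLike.star_def, RCLike.conj_mul] at h
    exact_mod_cast h

theorem trace_diagonal_mul_mul_diagonal_mul_conjTranspose {𝕜 : Type*} [RCLike 𝕜]
    (a b : n → ℝ) (K : Matrix n n 𝕜) :
    (diagonal (RCLike.ofReal ∘ a) * K * diagonal (RCLike.ofReal ∘ b) * Kᴴ).trace =
      ((a ⬝ᵥ of (fun i j => ‖K i j‖ ^ 2) *ᵥ b : ℝ) : 𝕜) := by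
  simp only [trace, diag, mul_apply, diagonal_apply, ite_mul, mul_ite, zero_mul, mul_zero,
    Finset.sum_ite_eq, Finset.sum_ite_eq', Finset.mem_univ, if_true, conjTranspose_apply,
    dotProduct, mulVec, of_apply, Function.comp_apply, RCLike.ofReal_sum, RCLike.ofReal_mul,
    RCLike.ofReal_pow, Finset.mul_sum, ← RCLike.mul_conj, RCLike.star_def]
  exact Finset.sum_congr rfl fun i _ => Finset.sum_congr rfl fun j _ => by ring

theorem Matrix.IsHermitian.trace_mul_eq_dotProduct {𝕜 : Type*} [RCLike 𝕜] {A B : Matrix n n 𝕜}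
    (hA : A.IsHermitian) (hB : B.IsHermitian) :
    (A * B).trace = ((hA.eigenvalues ⬝ᵥ
      of (fun i j => ‖(star (hA.eigenvectorUnitary : Matrix n n 𝕜) * hB.eigenvectorUnitary) i j‖ ^ 2)
        *ᵥ hB.eigenvalues : ℝ) : 𝕜) := by
  rw [← trace_diagonal_mul_mul_diagonal_mul_conjTranspose, ← star_eq_conjTranspose, star_mul,
    star_star, ← mul_assoc, trace_mul_comm _ (hA.eigenvectorUnitary : Matrix n n 𝕜)]
  conv_lhs => rw [hA.spectral_theorem, hB.spectral_theorem]
  simp only [Unitary.conjStarAlgAut_apply, mul_assoc]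

theorem stmt_8_general (d : ℕ) (A B : Matrix (Fin d) (Fin d) ℂ)
    (hA : A.IsHermitian) (hB : B.IsHermitian) :
    ∃ π : Equiv.Perm (Fin d),
      ((A * B).trace).re ≤ ∑ j, hA.eigenvalues (π j) * hB.eigenvalues j := by
  obtain ⟨π, hπ⟩ := exists_perm_dotProduct_mulVec_le
    (normSq_mem_doublyStochastic (star hA.eigenvectorUnitary * hB.eigenvectorUnitary).2)
    hA.eigenvalues hB.eigenvalues
  refine ⟨π, le_of_eq_of_le ?_ hπ⟩
  rw [hA.trace_mul_eq_dotProduct hB]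
  exact RCLike.ofReal_re (K := ℂ) _

theorem stmt_8 (d : ℕ) (A B : Matrix (Fin d) (Fin d) ℂ)
    (hA : A.IsHermitian) (hB : B.IsHermitian)
    (hA' : A.PosSemidef) (hB' : B.PosSemidef) :
    ∃ π : Equiv.Perm (Fin d),
      ((A * B).trace).re ≤ ∑ j, hA.eigenvalues (π j) * hB.eigenvalues j :=
  stmt_8_general d A B hA hB
end

section
/- For all a, x, z ∈ ℝ satisfying x² = a² + 2a + 2, z² = 1 - a², and -1 ≤ a ≤ 1 with x ≥ 0 and z ≥ 0, we have x + z/2 - 2 ≤ 0.368. -/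
/-! Bound each square root by its tangent line, `x ≤ (x² + c²) / (2c)`, at the points
`c = 17/8` and `c = 1/2`, close to the values of `x` and `z` at the maximiser `a ≈ 0.87`.
Substituting `x²` and `z²` turns `x + z/2` into a concave quadratic in `a`, which peaks at
`a = 8/9` with value `≈ 2.3672`. -/

theorem le_sq_add_sq_div_two_mul {K : Type*} [Field K] [LinearOrder K] [IsStrictOrderedRing K]
    (x : K) {c : K} (hc : 0 < c) : x ≤ (x ^ 2 + c ^ 2) / (2 * c) := by
  rw [le_div_iff₀ (by positivity), mul_comm x]
  exact two_mul_le_add_sq c x |>.trans_eq (add_comm _ _)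

theorem stmt_16_general (a x z : ℝ) (hx : x ^ 2 = a ^ 2 + 2 * a + 2) (hz : z ^ 2 = 1 - a ^ 2) :
    x + z / 2 - 2 ≤ 0.368 := by
  have hx_le := le_sq_add_sq_div_two_mul x (c := 17 / 8) (by norm_num)
  have hz_le := le_sq_add_sq_div_two_mul z (c := 1 / 2) (by norm_num)
  rw [hx] at hx_le
  rw [hz] at hz_le
  nlinarith [sq_nonneg (a - 8 / 9)]

theorem stmt_16 (a x z : ℝ) (hx : x ^ 2 = a ^ 2 + 2 * a + 2) (hz : z ^ 2 = 1 - a ^ 2)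
    (ha : a ∈ Set.Icc (-1 : ℝ) 1) (hx0 : 0 ≤ x) (hz0 : 0 ≤ z) :
    x + z / 2 - 2 ≤ 0.368 :=
  stmt_16_general a x z hx hz
end

section
/- For any d×d real symmetric matrix M, the orthogonal projection P onto the positive eigenspace of M maximizes Tr(A·M) over all d×d orthogonal projection matrices A; that is, for every symmetric idempotent A, Tr(A·M) ≤ Tr(P·M) = ∑ over positive eigenvalues of M. -/
/-!
Diagonalise `M = U Λ Uᵀ` with `U` orthogonal and take `P = U D Uᵀ`, where `D` is the diagonal
indicator of the positive eigenvalues. For any orthogonal projection `A`, the conjugate `B = Uᵀ A U`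
is again an orthogonal projection, so its diagonal entries lie in `[0, 1]`, and
`Tr(A M) = Tr(B Λ) = ∑ᵢ Bᵢᵢ λᵢ ≤ ∑ᵢ max(λᵢ, 0) = Tr(P M)`.
-/

open Matrix Unitary
open scoped ComplexOrder

theorem Finset.sum_mul_le_sum_ite_pos {ι : Type*} (s : Finset ι) {w x : ι → ℝ}
    (hw₀ : ∀ i ∈ s, 0 ≤ w i) (hw₁ : ∀ i ∈ s, w i ≤ 1) :
    ∑ i ∈ s, w i * x i ≤ ∑ i ∈ s, if 0 < x i then x i else 0 := by
  refine Finset.sum_le_sum fun i hi => ?_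
  split_ifs with hx
  · exact mul_le_of_le_one_left hx.le (hw₁ i hi)
  · exact mul_nonpos_of_nonneg_of_nonpos (hw₀ i hi) (not_lt.mp hx)

namespace Matrix

variable {n : Type*} [Fintype n]

theorem isStarProjection_iff_transpose {A : Matrix n n ℝ} :
    IsStarProjection A ↔ Aᵀ = A ∧ A * A = A := by
  rw [isStarProjection_iff', star_eq_conjTranspose, conjTranspose_eq_transpose_of_trivial,
    and_comm]

theorem diag_nonneg_of_isStarProjection {𝕜 : Type*} [RCLike 𝕜] {A : Matrix n n 𝕜}
    (hA : IsStarProjection A) (i : n) : 0 ≤ A i i := by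
  have hA' : A = Aᴴ * A := by
    rw [← star_eq_conjTranspose, hA.isSelfAdjoint.star_eq, hA.isIdempotentElem.eq]
  rw [hA']
  exact (posSemidef_conjTranspose_mul_self A).diag_nonneg

variable [DecidableEq n]

theorem diag_le_one_of_isStarProjection {𝕜 : Type*} [RCLike 𝕜] {A : Matrix n n 𝕜}
    (hA : IsStarProjection A) (i : n) : A i i ≤ 1 := by
  simpa using diag_nonneg_of_isStarProjection hA.one_sub i

theorem isStarProjection_diagonal {R : Type*} [Semiring R] [StarRing R] {p : n → R}
    (hp : ∀ i, IsStarProjection (p i)) : IsStarProjection (diagonal p) where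
  isIdempotentElem := by
    rw [IsIdempotentElem, diagonal_mul_diagonal]
    exact congrArg diagonal (funext fun i => (hp i).isIdempotentElem.eq)
  isSelfAdjoint := by
    rw [IsSelfAdjoint, star_eq_conjTranspose, diagonal_conjTranspose]
    exact congrArg diagonal (funext fun i => (hp i).isSelfAdjoint.star_eq)

theorem trace_conjStarAlgAut {R : Type*} [CommRing R] [StarRing R] (U : unitary (Matrix n n R))
    (X : Matrix n n R) : (conjStarAlgAut R _ U X).trace = X.trace := by
  rw [conjStarAlgAut_apply, trace_mul_cycle, coe_star_mul_self, one_mul]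

theorem trace_mul_diagonal {R : Type*} [CommRing R] (B : Matrix n n R) (v : n → R) :
    (B * diagonal v).trace = ∑ i, B i i * v i := by
  simp [trace, mul_diagonal]

namespace IsHermitian

variable {M : Matrix n n ℝ} (hM : M.IsHermitian)

noncomputable def positiveSpectralProjection : Matrix n n ℝ :=
  conjStarAlgAut ℝ _ hM.eigenvectorUnitary
    (diagonal fun i => if 0 < hM.eigenvalues i then 1 else 0)

theorem spectral_theorem_real :
    M = conjStarAlgAut ℝ _ hM.eigenvectorUnitary (diagonal hM.eigenvalues) := by
  simpa [RCLike.ofReal_real_eq_id] using hM.spectral_theorem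

theorem isStarProjection_positiveSpectralProjection :
    IsStarProjection hM.positiveSpectralProjection := by
  refine (isStarProjection_diagonal fun i => ?_).map _
  split_ifs
  exacts [.one ℝ, .zero ℝ]

theorem commute_positiveSpectralProjection : Commute hM.positiveSpectralProjection M := by
  have h := (commute_diagonal (fun i => if 0 < hM.eigenvalues i then (1 : ℝ) else 0)
    hM.eigenvalues).map (conjStarAlgAut ℝ _ hM.eigenvectorUnitary)
  rwa [← hM.spectral_theorem_real] at h

theorem trace_mul_eq_sum (A : Matrix n n ℝ) :
    (A * M).trace =
      ∑ i, (conjStarAlgAut ℝ _ hM.eigenvectorUnitary).symm A i i * hM.eigenvalues i := by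
  set φ := conjStarAlgAut ℝ _ hM.eigenvectorUnitary
  calc (A * M).trace = (φ (φ.symm A * diagonal hM.eigenvalues)).trace := by
        rw [map_mul, φ.apply_symm_apply, ← hM.spectral_theorem_real]
    _ = _ := by rw [trace_conjStarAlgAut, trace_mul_diagonal]

theorem trace_positiveSpectralProjection_mul :
    (hM.positiveSpectralProjection * M).trace =
      ∑ i, if 0 < hM.eigenvalues i then hM.eigenvalues i else 0 := by
  rw [hM.trace_mul_eq_sum, positiveSpectralProjection, StarAlgEquiv.symm_apply_apply]
  refine Finset.sum_congr rfl fun i _ => ?_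
  split_ifs <;> simp [*]

theorem trace_mul_le_trace_positiveSpectralProjection_mul {A : Matrix n n ℝ}
    (hA : IsStarProjection A) :
    (A * M).trace ≤ (hM.positiveSpectralProjection * M).trace := by
  have hB := hA.map (conjStarAlgAut ℝ _ hM.eigenvectorUnitary).symm
  rw [hM.trace_mul_eq_sum, trace_positiveSpectralProjection_mul]
  exact Finset.univ.sum_mul_le_sum_ite_pos (fun i _ => diag_nonneg_of_isStarProjection hB i)
    fun i _ => diag_le_one_of_isStarProjection hB i

end IsHermitian

end Matrix

theorem stmt_17 (d : ℕ) (M : Matrix (Fin d) (Fin d) ℝ) (hM : M.IsHermitian) :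
    ∃ P : Matrix (Fin d) (Fin d) ℝ,
      Pᵀ = P ∧ P * P = P ∧ P * M = M * P ∧
      (∀ A : Matrix (Fin d) (Fin d) ℝ, Aᵀ = A → A * A = A → (A * M).trace ≤ (P * M).trace) ∧
      (P * M).trace = ∑ i, if 0 < hM.eigenvalues i then hM.eigenvalues i else 0 := by
  obtain ⟨hPT, hPP⟩ :=
    isStarProjection_iff_transpose.mp hM.isStarProjection_positiveSpectralProjection
  refine ⟨hM.positiveSpectralProjection, hPT, hPP, hM.commute_positiveSpectralProjection.eq,
    fun A hAT hAA => ?_, hM.trace_positiveSpectralProjection_mul⟩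
  exact hM.trace_mul_le_trace_positiveSpectralProjection_mul
    (isStarProjection_iff_transpose.mpr ⟨hAT, hAA⟩)
end
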